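/- Let G be an n-player safety game on a possibly infinite arena, where player i's objective is Safe(T_i) for a set T_i ⊆ V, and let π' be the outcome from v_0 of some Nash equilibrium. Then there exist K ≤ |Visit(π') ∖ {0}| and a Nash-equilibrium outcome π from v_0 with Visit(π) ∖ {0} = {j_1 < … < j_K} admitting a finite simple segment decomposition (sg_1, …, sg_{K+1}) such that: (i) π is a simple play or a simple lasso; (ii) if K > 0, then for all l ∈ [K], the concatenation sg_1 · … · sg_l equals the prefix of π up to position j_l; (iii) if K > 0, then for all l ∈ [K], there is no cycle of the arena that uses only vertices occurring in sg_1 · … · sg_l and avoids last(sg_l); and (iv) Sat(π') ⊆ Sat(π). -/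

import Mathlib

open scoped ENNReal Classical

/-- An `n`-player arena on a (possibly infinite) directed graph: an edge relation
with no deadlocks, together with an assignment of each vertex to its owner. -/
structure Arena (V : Type) (n : ℕ) where
  E : V → V → Prop
  owner : V → Fin n
  no_deadlock : ∀ v, ∃ v', E v v'

namespace Arena

variable {V : Type} {n : ℕ}

/-- A play: an infinite sequence of vertices following edges. -/
def IsPlay (A : Arena V n) (π : ℕ → V) : Prop := ∀ j, A.E (π j) (π (j + 1))

/-- A strategy: given the past history (the earlier vertices, oldest first) and the
current vertex, pick an `E`-successor of the current vertex. -/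
structure Strategy (A : Arena V n) where
  next : List V → V → V
  valid : ∀ h v, A.E v (next h v)

/-- The list of the first `j` vertices of a play. -/
def pref (π : ℕ → V) (j : ℕ) : List V := (List.range j).map π

/-- A play is consistent with the strategy `σ` used by player `i`. -/
def Consistent (A : Arena V n) (i : Fin n) (σ : A.Strategy) (π : ℕ → V) : Prop :=
  ∀ j, A.owner (π j) = i → π (j + 1) = σ.next (pref π j) (π j)

/-- A memoryless strategy only depends on the current vertex. -/
def Memoryless {A : Arena V n} (σ : A.Strategy) : Prop :=
  ∀ h h' v, σ.next h v = σ.next h' v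

def outcomeAux (A : Arena V n) (σ : Fin n → A.Strategy) (v0 : V) : ℕ → List V × V
  | 0 => ([], v0)
  | j + 1 =>
      let p := outcomeAux A σ v0 j
      (p.1 ++ [p.2], (σ (A.owner p.2)).next p.1 p.2)

/-- The outcome of the strategy profile `σ` from `v0`: the unique play from `v0`
consistent with every strategy of the profile. -/
def outcome (A : Arena V n) (σ : Fin n → A.Strategy) (v0 : V) (j : ℕ) : V :=
  (outcomeAux A σ v0 j).2

/-- Reachability objective: visit `T`. -/
def ReachObj (T : Set V) : Set (ℕ → V) := {π | ∃ j, π j ∈ T}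

/-- Safety objective: never visit `T`. -/
def SafeObj (T : Set V) : Set (ℕ → V) := {π | ∀ j, π j ∉ T}

/-- Büchi objective: visit `T` infinitely often. -/
def BuchiObj (T : Set V) : Set (ℕ → V) := {π | ∀ j, ∃ k, j ≤ k ∧ π k ∈ T}

/-- co-Büchi objective: visit `T` only finitely often. -/
def CoBuchiObj (T : Set V) : Set (ℕ → V) := {π | ∃ j, ∀ k, j ≤ k → π k ∉ T}

/-- Shortest-path cost of a play: the total weight up to the first visit of `T`,
and `⊤` if `T` is never visited. -/
noncomputable def spCost (w : V → V → ℕ) (T : Set V) (π : ℕ → V) : ℝ≥0∞ :=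
  if ∃ k, π k ∈ T then
    (Finset.range (sInf {k | π k ∈ T})).sum fun j => (w (π j) (π (j + 1)) : ℝ≥0∞)
  else ⊤

/-- Winning region of player `p` (whose objective is `Ω`) in a two-player game:
vertices from which `p` has a strategy all of whose consistent plays lie in `Ω`. -/
def WinRegion (A : Arena V 2) (p : Fin 2) (Ω : Set (ℕ → V)) : Set V :=
  {v | ∃ σ : A.Strategy, ∀ π, A.IsPlay π → π 0 = v → A.Consistent p σ π → π ∈ Ω}

/-- Lower value `inf_{σ₁} sup_{σ₂}` of a two-player zero-sum game with cost `c`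
(minimised by player 1, maximised by player 2). -/
noncomputable def valIS (A : Arena V 2) (c : (ℕ → V) → ℝ≥0∞) (v : V) : ℝ≥0∞ :=
  ⨅ σ1 : A.Strategy, ⨆ σ2 : A.Strategy, c (outcome A ![σ1, σ2] v)

/-- Upper value `sup_{σ₂} inf_{σ₁}`. -/
noncomputable def valSI (A : Arena V 2) (c : (ℕ → V) → ℝ≥0∞) (v : V) : ℝ≥0∞ :=
  ⨆ σ2 : A.Strategy, ⨅ σ1 : A.Strategy, c (outcome A ![σ1, σ2] v)

/-- Nash equilibrium from `v0` for cost functions (each player minimises):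
no unilateral deviation decreases the deviator's cost. -/
def IsNECost (A : Arena V n) (cost : Fin n → (ℕ → V) → ℝ≥0∞)
    (σ : Fin n → A.Strategy) (v0 : V) : Prop :=
  ∀ (i : Fin n) (τ : A.Strategy),
    cost i (outcome A σ v0) ≤ cost i (outcome A (Function.update σ i τ) v0)

/-- Nash equilibrium from `v0` for objectives: if a unilateral deviation of player `i`
satisfies `Ω i`, then so does the equilibrium outcome. -/
def IsNEObj (A : Arena V n) (Ω : Fin n → Set (ℕ → V))
    (σ : Fin n → A.Strategy) (v0 : V) : Prop :=
  ∀ (i : Fin n) (τ : A.Strategy),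
    outcome A (Function.update σ i τ) v0 ∈ Ω i → outcome A σ v0 ∈ Ω i

/-- The coalition arena of player `i`: player `i` (as player `0`) against all others. -/
def coalition (A : Arena V n) (i : Fin n) : Arena V 2 where
  E := A.E
  owner := fun v => if A.owner v = i then 0 else 1
  no_deadlock := A.no_deadlock

/-- Winning region of player `i` in their coalition game for objective `Ω`. -/
def coalWin (A : Arena V n) (i : Fin n) (Ω : Set (ℕ → V)) : Set V :=
  WinRegion (coalition A i) 0 Ω

/-- Value of a vertex in player `i`'s coalition game with cost `c`. -/
noncomputable def coalVal (A : Arena V n) (i : Fin n) (c : (ℕ → V) → ℝ≥0∞) (v : V) :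
    ℝ≥0∞ :=
  valIS (coalition A i) c v

/-- Players whose reachability objective is satisfied by `π`. -/
def satReach (T : Fin n → Set V) (π : ℕ → V) : Set (Fin n) := {i | ∃ j, π j ∈ T i}

/-- Players whose safety objective is satisfied by `π`. -/
def satSafe (T : Fin n → Set V) (π : ℕ → V) : Set (Fin n) := {i | ∀ j, π j ∉ T i}

/-- Players whose Büchi objective is satisfied by `π`. -/
def satBuchi (T : Fin n → Set V) (π : ℕ → V) : Set (Fin n) :=
  {i | ∀ j, ∃ k, j ≤ k ∧ π k ∈ T i}

/-- Players whose co-Büchi objective is satisfied by `π`. -/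
def satCoBuchi (T : Fin n → Set V) (π : ℕ → V) : Set (Fin n) :=
  {i | ∃ j, ∀ k, j ≤ k → π k ∉ T i}

/-- Earliest positions at which the targets visited by `π` are first visited. -/
def visitSet (T : Fin n → Set V) (π : ℕ → V) : Set ℕ :=
  {m | ∃ i, (∃ j, π j ∈ T i) ∧ m = sInf {j | π j ∈ T i}}

/-- A Mealy machine with memory states `M`. -/
structure Mealy (A : Arena V n) (M : Type) where
  init : M
  up : M → V → M
  nxt : M → V → V
  valid : ∀ m v, A.E v (nxt m v)

/-- The strategy `σ` is induced by the Mealy machine `mm`. -/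
def InducedBy {A : Arena V n} {M : Type} (σ : A.Strategy) (mm : Mealy A M) : Prop :=
  ∀ h v, σ.next h v = mm.nxt (h.foldl mm.up mm.init) v

/-- `σ` has memory size at most `b`. -/
def HasMemorySize {A : Arena V n} (σ : A.Strategy) (b : ℕ) : Prop :=
  ∃ (M : Type) (mm : Mealy A M), Finite M ∧ Nat.card M ≤ b ∧ InducedBy σ mm

/-- `σ` is a finite-memory strategy. -/
def FiniteMemory {A : Arena V n} (σ : A.Strategy) : Prop :=
  ∃ (M : Type) (mm : Mealy A M), Finite M ∧ InducedBy σ mm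

/-- The (finite) segment of `π` between positions `a` and `b` is a simple history. -/
def SimpleSeg (π : ℕ → V) (a b : ℕ) : Prop :=
  ∀ m m', a ≤ m → m ≤ b → a ≤ m' → m' ≤ b → π m = π m' → m = m'

/-- The suffix of `π` from position `a` is a simple play. -/
def SimplePlaySeg (π : ℕ → V) (a : ℕ) : Prop :=
  ∀ m m', a ≤ m → a ≤ m' → π m = π m' → m = m'

/-- The suffix of `π` from position `a` is a simple lasso `p c^ω` with `p c`
a simple history. -/
def SimpleLassoSeg (π : ℕ → V) (a : ℕ) : Prop :=
  ∃ k ℓ, 0 < ℓ ∧ (∀ m, a + k ≤ m → π (m + ℓ) = π m) ∧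
    ∀ m m', a ≤ m → m < a + k + ℓ → a ≤ m' → m' < a + k + ℓ → π m = π m' → m = m'

/-- The segment of `π` between positions `a` and `b` is a simple cycle. -/
def SimpleCycleSeg (π : ℕ → V) (a b : ℕ) : Prop :=
  a < b ∧ π b = π a ∧
    ∀ m m', a ≤ m → m < b → a ≤ m' → m' < b → π m = π m' → m = m'

/-- Total weight of a history (a list of vertices). -/
def histWeight (w : V → V → ℕ) : List V → ℕ
  | [] => 0
  | [_] => 0
  | a :: b :: t => w a b + histWeight w (b :: t)

/-- The list of vertices along positions `a..b` (inclusive) of a play. -/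
def segList (π : ℕ → V) (a b : ℕ) : List V :=
  (List.range (b - a + 1)).map fun m => π (a + m)

/-- The segment of `π` between positions `a` and `b` has minimal weight among all
histories that share its first and last vertex and traverse only its vertices. -/
def MinWeightSeg (A : Arena V n) (w : V → V → ℕ) (π : ℕ → V) (a b : ℕ) : Prop :=
  ∀ h : List V, h ≠ [] → List.Chain' A.E h →
    h.head? = some (π a) → h.getLast? = some (π b) →
    (∀ x ∈ h, ∃ m, a ≤ m ∧ m ≤ b ∧ π m = x) →
    histWeight w (segList π a b) ≤ histWeight w h

/-- Given cut positions `p`, segments number `l` and `l'` of `π` carry the same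
vertex sequence. -/
def SegEq (π : ℕ → V) (p : ℕ → ℕ) (l l' : ℕ) : Prop :=
  p (l' + 1) - p l' = p (l + 1) - p l ∧
    ∀ m, m ≤ p (l + 1) - p l → π (p l' + m) = π (p l + m)

/-- There is no cycle of the arena using only vertices of `S` and avoiding `avoid`. -/
def NoCycleAvoid (A : Arena V n) (S : Set V) (avoid : V) : Prop :=
  ¬ ∃ (m : ℕ) (c : ℕ → V), 0 < m ∧ (∀ j, j < m → A.E (c j) (c (j + 1))) ∧
      c m = c 0 ∧ ∀ j, j ≤ m → c j ∈ S ∧ c j ≠ avoid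

end Arena

/-!
A Nash equilibrium outcome `ρ` can be *folded*: replaced by a play `π` that agrees with `ρ`
up to some position `b` and afterwards only visits vertices of `ρ 0, …, ρ b`. Such a `π` is
again an equilibrium outcome. The new profile follows `π`, and after a deviation at position
`m` it plays as the old profile would after the same deviation grafted onto the history of `ρ`
ending at a position `ψ m ≤ m` with `ρ (ψ m) = π m`. A deviation that is safe against the new
profile thus yields one that is safe against the old profile, so `ρ`, and with it `π`, is
safe for the deviator. Folding can only remove first visits and add satisfied objectives.

If a cycle through vertices seen before a first visit `f` avoids `ρ f`, entering it forever
before `f` is a fold that removes the visit `f`; by induction on the number of first visits we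
reach a play without such cycles. Folding that play at its first repetition gives a simple
lasso (or the play was already simple), and its first visits are the cuts of the decomposition.
-/

theorem Set.Finite.exists_increasing_enum {F : Set ℕ} (hF : F.Finite) (h0 : 0 ∉ F) :
    ∃ e : ℕ → ℕ, e 0 = 0 ∧ (∀ l < F.ncard, e l < e (l + 1)) ∧
      F = {m | ∃ l, 1 ≤ l ∧ l ≤ F.ncard ∧ m = e l} := by
  set p : ℕ → Prop := fun m => m ∈ insert 0 F
  have hf : (Set.ofPred p).Finite := hF.insert 0
  have hcard : hf.toFinset.card = F.ncard + 1 := by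
    rw [← Set.ncard_eq_toFinset_card _ hf]
    exact Set.ncard_insert_of_notMem h0 hF
  have he0 : Nat.nth p 0 = 0 := Nat.nth_zero_of_zero (Set.mem_insert 0 F)
  refine ⟨Nat.nth p, he0, fun l hl => Nat.nth_lt_nth_of_lt_card hf l.lt_succ_self (by omega),
    ?_⟩
  ext m
  constructor
  · intro hm
    obtain ⟨l, hl, rfl⟩ := Nat.exists_lt_card_finite_nth_eq hf (Set.mem_insert_of_mem 0 hm)
    refine ⟨l, Nat.one_le_iff_ne_zero.2 ?_, by omega, rfl⟩
    rintro rfl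
    exact h0 (he0 ▸ hm)
  · rintro ⟨l, h1, h2, rfl⟩
    have hpos : 0 < Nat.nth p l := he0 ▸ Nat.nth_lt_nth_of_lt_card hf h1 (by omega)
    exact (Nat.nth_mem_of_lt_card hf (by omega) : p (Nat.nth p l)).resolve_left hpos.ne'

namespace Arena

variable {V : Type} {n : ℕ} {A : Arena V n} {T : Fin n → Set V}

section Histories

theorem pref_length (π : ℕ → V) (j : ℕ) : (pref π j).length = j := by simp [pref]

theorem pref_succ (π : ℕ → V) (j : ℕ) : pref π (j + 1) = pref π j ++ [π j] := by
  simp [pref, List.range_succ]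

theorem pref_add (π : ℕ → V) (a b : ℕ) :
    pref π (a + b) = pref π a ++ pref (fun t => π (a + t)) b := by
  simp [pref, List.range_add]

theorem pref_take (π : ℕ → V) (a b : ℕ) : (pref π a).take b = pref π (min b a) := by
  simp [pref, ← List.map_take, List.take_range]

theorem pref_eq_pref_iff {π π' : ℕ → V} {k : ℕ} :
    pref π k = pref π' k ↔ ∀ m < k, π m = π' m := by
  simp [pref, List.map_inj_left]

theorem exists_first_ne {f g : ℕ → V} (h0 : f 0 = g 0) (hne : f ≠ g) :
    ∃ m, (∀ j ≤ m, f j = g j) ∧ f (m + 1) ≠ g (m + 1) := by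
  have hex : ∃ k, f k ≠ g k := by
    by_contra! h
    exact hne (funext h)
  have hpos : Nat.find hex ≠ 0 := fun h => Nat.find_spec hex (h ▸ h0)
  refine ⟨Nat.find hex - 1, fun j hj => ?_, ?_⟩
  · by_contra hfg
    exact Nat.find_min hex (by omega) hfg
  · rw [Nat.sub_add_cancel (Nat.one_le_iff_ne_zero.2 hpos)]
    exact Nat.find_spec hex

end Histories

section Outcome

theorem outcomeAux_fst (σ : Fin n → A.Strategy) (v0 : V) (j : ℕ) :
    (outcomeAux A σ v0 j).1 = pref (outcome A σ v0) j := by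
  induction j with
  | zero => simp [outcomeAux, pref]
  | succ j ih =>
    rw [pref_succ, ← ih]
    rfl

theorem outcome_zero (σ : Fin n → A.Strategy) (v0 : V) : outcome A σ v0 0 = v0 := rfl

theorem consistent_outcome (σ : Fin n → A.Strategy) (v0 : V) (i : Fin n) :
    A.Consistent i (σ i) (outcome A σ v0) := by
  intro j hj
  rw [← hj, outcome, outcomeAux, outcomeAux_fst]
  rfl

theorem outcome_isPlay (σ : Fin n → A.Strategy) (v0 : V) : A.IsPlay (outcome A σ v0) := by
  intro j
  rw [consistent_outcome σ v0 _ j rfl]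
  exact Strategy.valid _ _ _

theorem outcome_eq_of_consistent {σ : Fin n → A.Strategy} {v0 : V} {π : ℕ → V}
    (h0 : π 0 = v0) (hπ : ∀ i, A.Consistent i (σ i) π) : outcome A σ v0 = π := by
  funext j
  induction j using Nat.strong_induction_on with
  | _ j ih =>
    cases j with
    | zero => exact h0.symm
    | succ j =>
      have hpref : pref (outcome A σ v0) j = pref π j :=
        pref_eq_pref_iff.2 fun m hm => ih m (by omega)
      rw [consistent_outcome σ v0 _ j rfl, hpref, ih j (by omega), hπ _ j rfl]

noncomputable def Strategy.follow (A : Arena V n) (ρ : ℕ → V) : A.Strategy where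
  next h v := if A.E v (ρ (h.length + 1)) then ρ (h.length + 1)
    else Classical.choose (A.no_deadlock v)
  valid h v := by
    split_ifs with hE
    · exact hE
    · exact Classical.choose_spec (A.no_deadlock v)

theorem consistent_follow {ρ : ℕ → V} (hρ : A.IsPlay ρ) (i : Fin n) :
    A.Consistent i (Strategy.follow A ρ) ρ := by
  intro j _
  simp [Strategy.follow, pref_length, hρ j]

theorem outcome_update_follow {σ : Fin n → A.Strategy} {v0 : V} {i : Fin n} {ρ : ℕ → V}
    (hρ : A.IsPlay ρ) (h0 : ρ 0 = v0) (hcons : ∀ j ≠ i, A.Consistent j (σ j) ρ) :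
    outcome A (Function.update σ i (Strategy.follow A ρ)) v0 = ρ := by
  refine outcome_eq_of_consistent h0 fun j => ?_
  by_cases hj : j = i
  · subst hj
    simpa using consistent_follow hρ j
  · simpa [Function.update_of_ne hj] using hcons j hj

end Outcome

section Plays

def splice (α β : ℕ → V) (p : ℕ) : ℕ → V := fun m => if m ≤ p then α m else β (m - p)

theorem IsPlay.splice {α β : ℕ → V} {p : ℕ} (hα : A.IsPlay α) (hβ : A.IsPlay β)
    (h : β 0 = α p) : A.IsPlay (splice α β p) := by
  intro m
  rcases lt_trichotomy m p with hm | rfl | hm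
  · simpa [Arena.splice, hm.le, Nat.succ_le_of_lt hm] using hα m
  · simpa [Arena.splice, ← h] using hβ 0
  · have hm' : m + 1 - p = m - p + 1 := by omega
    simpa [Arena.splice, hm.not_ge, hm', show ¬ m + 1 ≤ p by omega] using hβ (m - p)

theorem pref_splice {α β : ℕ → V} {p k : ℕ} (h : β 0 = α p) (hk : p ≤ k) :
    pref (splice α β p) k = pref α p ++ pref β (k - p) := by
  obtain ⟨r, rfl⟩ := Nat.exists_eq_add_of_le hk
  rw [pref_add, Nat.add_sub_cancel_left]
  congr 1
  · exact pref_eq_pref_iff.2 fun m hm => if_pos hm.le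
  · refine pref_eq_pref_iff.2 fun t _ => ?_
    cases t with
    | zero => simp [splice, h]
    | succ t => simp [splice]

theorem isPlay_mod {c : ℕ → V} {ℓ : ℕ} (hℓ : 0 < ℓ) (hc : ∀ j < ℓ, A.E (c j) (c (j + 1)))
    (hcℓ : c ℓ = c 0) : A.IsPlay fun t => c (t % ℓ) := by
  intro t
  have ht := Nat.mod_lt t hℓ
  have hsucc : (t + 1) % ℓ = (t % ℓ + 1) % ℓ := by simp [Nat.add_mod]
  dsimp only
  rcases (Nat.add_one_le_of_lt ht).lt_or_eq with h | h
  · rw [hsucc, Nat.mod_eq_of_lt h]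
    exact hc _ ht
  · have hlast := hc _ ht
    rw [h] at hlast
    rwa [hsucc, h, Nat.mod_self, ← hcℓ]

end Plays

section Folding

def FoldsInto (π ρ : ℕ → V) (b : ℕ) : Prop := (∀ m ≤ b, π m = ρ m) ∧ ∀ m, ∃ q ≤ b, π m = ρ q

theorem FoldsInto.exists_index {π ρ : ℕ → V} {b : ℕ} (h : FoldsInto π ρ b) :
    ∃ ψ : ℕ → ℕ, (∀ m, π m = ρ (ψ m)) ∧ (∀ m, ψ m ≤ m) ∧ ∀ m, ∀ q ≤ ψ m, π q = ρ q := by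
  choose f hfb hf using h.2
  refine ⟨fun m => if m ≤ b then m else f m, fun m => ?_, fun m => ?_, fun m q hq => h.1 q ?_⟩ <;>
    dsimp only at * <;> split_ifs at * with hm
  exacts [h.1 m hm, hf m, le_rfl, (hfb m).trans (not_le.1 hm).le, hq.trans hm, hq.trans (hfb m)]

theorem mem_visitSet_iff {π : ℕ → V} {f : ℕ} :
    f ∈ visitSet T π ↔ ∃ i, π f ∈ T i ∧ ∀ j < f, π j ∉ T i := by
  constructor
  · rintro ⟨i, ⟨j, hj⟩, rfl⟩
    exact ⟨i, Nat.sInf_mem (s := {j | π j ∈ T i}) ⟨j, hj⟩,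
      fun k hk => Nat.notMem_of_lt_sInf hk⟩
  · rintro ⟨i, hf, hmin⟩
    exact ⟨i, ⟨f, hf⟩, le_antisymm
      (le_csInf ⟨f, hf⟩ fun j hj => not_lt.1 fun hjf => hmin j hjf hj) (Nat.sInf_le hf)⟩

theorem visitSet_finite (T : Fin n → Set V) (π : ℕ → V) : (visitSet T π).Finite := by
  refine (Set.finite_range fun i => sInf {j | π j ∈ T i}).subset ?_
  rintro m ⟨i, -, rfl⟩
  exact ⟨i, rfl⟩

theorem FoldsInto.visitSet_subset {π ρ : ℕ → V} {b : ℕ} (h : FoldsInto π ρ b) :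
    visitSet T π ⊆ visitSet T ρ ∩ Set.Iic b := by
  intro f hf
  obtain ⟨i, hfT, hmin⟩ := mem_visitSet_iff.1 hf
  obtain ⟨q, hqb, hq⟩ := h.2 f
  have hfb : f ≤ b := not_lt.1 fun hbf => hmin q (by omega) (by rwa [h.1 q hqb, ← hq])
  refine ⟨mem_visitSet_iff.2 ⟨i, by rwa [← h.1 f hfb], fun j hj => ?_⟩, hfb⟩
  rw [← h.1 j (by omega)]
  exact hmin j hj

theorem FoldsInto.satSafe_subset {π ρ : ℕ → V} {b : ℕ} (h : FoldsInto π ρ b) :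
    satSafe T ρ ⊆ satSafe T π := by
  intro i hi m
  obtain ⟨q, -, hq⟩ := h.2 m
  rw [hq]
  exact hi q

end Folding

section Transfer

noncomputable def lastAgree (π : ℕ → V) (L : List V) : ℕ :=
  sInf {k | L.take (k + 2) ≠ pref π (k + 2)}

theorem lastAgree_pref {π ρ : ℕ → V} {m k : ℕ} (hagree : ∀ j ≤ m, ρ j = π j)
    (hdev : ρ (m + 1) ≠ π (m + 1)) (hk : m + 1 ≤ k) : lastAgree π (pref ρ (k + 1)) = m := by
  have key : ∀ j ≤ m, (pref ρ (k + 1)).take (j + 2) ≠ pref π (j + 2) ↔ j = m := by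
    intro j hj
    rw [pref_take, min_eq_left (by omega), Ne, pref_eq_pref_iff]
    constructor
    · intro h
      by_contra hne
      exact h fun l hl => hagree l (by omega)
    · rintro rfl h
      exact hdev (h _ (by omega))
  have hm := (key m le_rfl).2 rfl
  exact le_antisymm (Nat.sInf_le hm)
    (le_csInf ⟨m, hm⟩ fun j hj => not_lt.1 fun hjm => hjm.ne ((key j hjm.le).1 hj))

variable (σ : Fin n → A.Strategy) (v0 : V) (π : ℕ → V) (ψ : ℕ → ℕ)

/-- Follows `π`. On a history that agrees with `π` up to position `m` and then leaves it,
plays as `σ j` would on the history of `outcome A σ v0` up to position `ψ m` followed by the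
part of the given history after `m`. -/
noncomputable def foldStrategy (j : Fin n) : A.Strategy where
  next h v :=
    if h ++ [v] = pref π (h.length + 1) then (Strategy.follow A π).next h v
    else (σ j).next (pref (outcome A σ v0) (ψ (lastAgree π (h ++ [v])))
      ++ h.drop (lastAgree π (h ++ [v]))) v
  valid h v := by
    split_ifs <;> apply Strategy.valid

variable {π}

theorem foldStrategy_next_pref (hπ : A.IsPlay π) (j : Fin n) (k : ℕ) :
    (foldStrategy σ v0 π ψ j).next (pref π k) (π k) = π (k + 1) := by
  simp [foldStrategy, ← pref_succ, pref_length, Strategy.follow, hπ k]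

theorem foldStrategy_next_of_ne {ρ : ℕ → V} {m k : ℕ} (hagree : ∀ j ≤ m, ρ j = π j)
    (hdev : ρ (m + 1) ≠ π (m + 1)) (hk : m + 1 ≤ k) (j : Fin n) :
    (foldStrategy σ v0 π ψ j).next (pref ρ k) (ρ k)
      = (σ j).next (pref (outcome A σ v0) (ψ m) ++ (pref ρ k).drop m) (ρ k) := by
  have hoff : pref ρ (k + 1) ≠ pref π (k + 1) := fun h =>
    hdev (pref_eq_pref_iff.1 h _ (by omega))
  simp only [foldStrategy, ← pref_succ, pref_length, lastAgree_pref hagree hdev hk,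
    if_neg hoff]

theorem outcome_foldStrategy (hπ : A.IsPlay π) (h0 : π 0 = v0) :
    outcome A (foldStrategy σ v0 π ψ) v0 = π :=
  outcome_eq_of_consistent h0 fun j k _ => (foldStrategy_next_pref σ v0 ψ hπ j k).symm

variable {σ v0 ψ} {i : Fin n} {τ : A.Strategy} {ρ : ℕ → V} {m : ℕ}

theorem owner_eq_of_deviation (hπ : A.IsPlay π)
    (hρ : outcome A (Function.update (foldStrategy σ v0 π ψ) i τ) v0 = ρ)
    (hagree : ∀ j ≤ m, ρ j = π j) (hdev : ρ (m + 1) ≠ π (m + 1)) : A.owner (π m) = i := by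
  by_contra hne
  apply hdev
  have hstep := consistent_outcome (Function.update (foldStrategy σ v0 π ψ) i τ) v0
    (A.owner (π m)) m (by rw [hρ, hagree m le_rfl])
  rw [hρ, Function.update_of_ne hne, hagree m le_rfl,
    pref_eq_pref_iff.2 fun q hq => hagree q hq.le] at hstep
  rw [hstep]
  exact foldStrategy_next_pref σ v0 ψ hπ _ m

theorem consistent_splice_of_deviation (hψ : π m = outcome A σ v0 (ψ m))
    (hρ : outcome A (Function.update (foldStrategy σ v0 π ψ) i τ) v0 = ρ)
    (hagree : ∀ j ≤ m, ρ j = π j) (hdev : ρ (m + 1) ≠ π (m + 1))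
    (howner : A.owner (π m) = i) {j : Fin n} (hj : j ≠ i) :
    A.Consistent j (σ j) (splice (outcome A σ v0) (fun t => ρ (m + t)) (ψ m)) := by
  set out := outcome A σ v0
  have hβ : ρ (m + 0) = out (ψ m) := by rw [Nat.add_zero, hagree m le_rfl, hψ]
  intro k hk
  rcases lt_trichotomy k (ψ m) with hkq | rfl | hqk
  · have hpref : pref (splice out (fun t => ρ (m + t)) (ψ m)) k = pref out k :=
      pref_eq_pref_iff.2 fun l hl => if_pos (by omega)
    simp only [splice, if_pos hkq.le, if_pos (show k + 1 ≤ ψ m by omega)] at hk ⊢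
    rw [hpref]
    exact consistent_outcome σ v0 j k hk
  · simp only [splice, le_rfl, if_true, ← hψ, howner] at hk
    exact absurd hk.symm hj
  · have hsucc : k + 1 - ψ m = k - ψ m + 1 := by omega
    have hpref : pref (splice out (fun t => ρ (m + t)) (ψ m)) k
        = pref out (ψ m) ++ (pref ρ (m + (k - ψ m))).drop m := by
      rw [pref_splice hβ hqk.le, pref_add, List.drop_left' (pref_length ρ m)]
    simp only [splice, hqk.not_ge, show ¬ k + 1 ≤ ψ m by omega, if_false, hsucc] at hk ⊢
    rw [hpref]
    have hstep := consistent_outcome (Function.update (foldStrategy σ v0 π ψ) i τ) v0 j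
      (m + (k - ψ m)) (by rw [hρ]; exact hk)
    rwa [hρ, Function.update_of_ne hj, foldStrategy_next_of_ne σ v0 ψ hagree hdev (by omega)]
      at hstep

theorem isNEObj_foldStrategy (hNE : A.IsNEObj (fun i => SafeObj (T i)) σ v0)
    (hπ : A.IsPlay π) (hψ : ∀ m, π m = outcome A σ v0 (ψ m)) (hψle : ∀ m, ψ m ≤ m)
    (hpre : ∀ m, ∀ q ≤ ψ m, π q = outcome A σ v0 q) :
    A.IsNEObj (fun i => SafeObj (T i)) (foldStrategy σ v0 π ψ) v0 := by
  have h0 : π 0 = v0 := by rw [hψ 0, Nat.le_zero.1 (hψle 0), outcome_zero]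
  intro i τ hsafe
  rw [outcome_foldStrategy σ v0 ψ hπ h0]
  set ρ := outcome A (Function.update (foldStrategy σ v0 π ψ) i τ) v0 with hρ
  by_cases hρπ : ρ = π
  · rwa [← hρπ]
  obtain ⟨m, hagree, hdev⟩ := exists_first_ne (by rw [h0]; rfl) hρπ
  -- the deviation, replayed against `σ` after the corresponding history of `outcome A σ v0`
  set ρ' := splice (outcome A σ v0) (fun t => ρ (m + t)) (ψ m)
  have hρ' : outcome A (Function.update σ i (Strategy.follow A ρ')) v0 = ρ' :=
    outcome_update_follow
      ((outcome_isPlay σ v0).splice (fun t => outcome_isPlay _ v0 (m + t))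
        (by rw [Nat.add_zero, hagree m le_rfl, hψ]))
      (by simp [ρ', splice]; rfl)
      fun j hj => consistent_splice_of_deviation (hψ m) hρ.symm hagree hdev
        (owner_eq_of_deviation hπ hρ.symm hagree hdev) hj
  have hsafe' : ρ' ∈ SafeObj (T i) := by
    intro k hk
    simp only [ρ', splice] at hk
    split_ifs at hk with hkq
    · exact hsafe k (by rwa [hagree k (hkq.trans (hψle m)), hpre m k hkq])
    · exact hsafe _ hk
  have hout := hNE i _ (hρ' ▸ hsafe')
  intro k hk
  exact hout (ψ k) (hψ k ▸ hk)

theorem FoldsInto.exists_isNEObj (hNE : A.IsNEObj (fun i => SafeObj (T i)) σ v0)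
    (hπ : A.IsPlay π) {b : ℕ} (hfold : FoldsInto π (outcome A σ v0) b) :
    ∃ σ' : Fin n → A.Strategy,
      A.IsNEObj (fun i => SafeObj (T i)) σ' v0 ∧ outcome A σ' v0 = π := by
  obtain ⟨ψ, hψ, hψle, hpre⟩ := hfold.exists_index
  have h0 : π 0 = v0 := by rw [hψ 0, Nat.le_zero.1 (hψle 0), outcome_zero]
  exact ⟨_, isNEObj_foldStrategy hNE hπ hψ hψle hpre, outcome_foldStrategy σ v0 ψ hπ h0⟩

end Transfer

section Reduction

def NoCycleAvoidAtVisits (A : Arena V n) (T : Fin n → Set V) (π : ℕ → V) : Prop :=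
  ∀ f ∈ visitSet T π, NoCycleAvoid A (π '' Set.Iic f) (π f)

theorem FoldsInto.noCycleAvoidAtVisits {π ρ : ℕ → V} {b : ℕ} (h : FoldsInto π ρ b)
    (hρ : NoCycleAvoidAtVisits A T ρ) : NoCycleAvoidAtVisits A T π := by
  intro f hf
  obtain ⟨hfρ, hfb⟩ := h.visitSet_subset hf
  have himg : π '' Set.Iic f = ρ '' Set.Iic f :=
    Set.image_congr fun m (hm : m ≤ f) => h.1 m (hm.trans hfb)
  rw [himg, h.1 f hfb]
  exact hρ f hfρ

/-- A cycle avoiding `ρ f` through vertices seen before `f` can be entered at the last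
position `p < f` where one of its vertices occurs, and then followed forever. -/
theorem exists_foldsInto_of_not_noCycleAvoid {ρ : ℕ → V} {f : ℕ} (hρ : A.IsPlay ρ)
    (hcyc : ¬ NoCycleAvoid A (ρ '' Set.Iic f) (ρ f)) :
    ∃ π p, p < f ∧ A.IsPlay π ∧ FoldsInto π ρ p := by
  obtain ⟨ℓ, c, hℓ, hE, hcℓ, hc⟩ := not_not.1 hcyc
  set c' : ℕ → V := fun t => c (t % ℓ)
  have hocc : ∀ t, ∃ m < f, ρ m = c' t := fun t => by
    obtain ⟨⟨m, hm, hmc⟩, hne⟩ := hc (t % ℓ) (Nat.mod_lt t hℓ).le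
    exact ⟨m, lt_of_le_of_ne hm fun h => hne (h ▸ hmc.symm), hmc⟩
  choose pos hposf hpos using hocc
  obtain ⟨t0, -, ht0⟩ := (Finset.range ℓ).exists_max_image pos ⟨0, by simpa using hℓ⟩
  refine ⟨splice ρ (fun s => c' (t0 + s)) (pos t0), pos t0, hposf t0,
    hρ.splice (fun s => isPlay_mod hℓ hE hcℓ (t0 + s)) (hpos t0).symm,
    fun m hm => if_pos hm, fun m => ?_⟩
  by_cases hm : m ≤ pos t0
  · exact ⟨m, hm, if_pos hm⟩
  · refine ⟨pos ((t0 + (m - pos t0)) % ℓ), ht0 _ (by simpa using Nat.mod_lt _ hℓ), ?_⟩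
    simp [splice, hm, hpos, c']

theorem exists_isNEObj_noCycleAvoidAtVisits {σ : Fin n → A.Strategy} {v0 : V}
    (hNE : A.IsNEObj (fun i => SafeObj (T i)) σ v0) :
    ∃ σ₁ : Fin n → A.Strategy, A.IsNEObj (fun i => SafeObj (T i)) σ₁ v0 ∧
      visitSet T (outcome A σ₁ v0) ⊆ visitSet T (outcome A σ v0) ∧
      satSafe T (outcome A σ v0) ⊆ satSafe T (outcome A σ₁ v0) ∧
      NoCycleAvoidAtVisits A T (outcome A σ₁ v0) := by
  induction hN : (visitSet T (outcome A σ v0)).ncard using Nat.strong_induction_on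
    generalizing σ with
  | _ N ih =>
  by_cases hρ : NoCycleAvoidAtVisits A T (outcome A σ v0)
  · exact ⟨σ, hNE, subset_rfl, subset_rfl, hρ⟩
  obtain ⟨f, hf, hcyc⟩ : ∃ f ∈ visitSet T (outcome A σ v0),
      ¬ NoCycleAvoid A (outcome A σ v0 '' Set.Iic f) (outcome A σ v0 f) := by
    simpa [NoCycleAvoidAtVisits] using hρ
  obtain ⟨π, p, hpf, hπ, hfold⟩ :=
    exists_foldsInto_of_not_noCycleAvoid (outcome_isPlay σ v0) hcyc
  obtain ⟨σ₂, hNE₂, rfl⟩ := hfold.exists_isNEObj hNE hπ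
  have hvis : visitSet T (outcome A σ₂ v0) ⊂ visitSet T (outcome A σ v0) :=
    Set.ssubset_iff_subset_ne.2 ⟨fun g hg => (hfold.visitSet_subset hg).1,
      fun h => (Set.mem_Iic.1 (hfold.visitSet_subset (h ▸ hf)).2).not_gt hpf⟩
  obtain ⟨σ₁, hNE₁, hvis₁, hsat₁, hcyc₁⟩ :=
    ih _ (hN ▸ Set.ncard_lt_ncard hvis (visitSet_finite T _)) hNE₂ rfl
  exact ⟨σ₁, hNE₁, hvis₁.trans hvis.subset, hfold.satSafe_subset.trans hsat₁, hcyc₁⟩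

end Reduction

section Simple

def SimpleUpTo (π : ℕ → V) (M : ℕ) : Prop :=
  Set.InjOn π (Set.Iic M) ∧ ∀ a ≤ M, SimplePlaySeg π a ∨ SimpleLassoSeg π a

theorem SimpleUpTo.simpleSeg {π : ℕ → V} {M : ℕ} (h : SimpleUpTo π M) {a b : ℕ}
    (hb : b ≤ M) : SimpleSeg π a b :=
  fun m m' _ hm _ hm' hπ => h.1 (hm.trans hb : m ≤ M) (hm'.trans hb : m' ≤ M) hπ

theorem SimplePlaySeg.simpleUpTo {π : ℕ → V} (h : SimplePlaySeg π 0) (M : ℕ) :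
    SimpleUpTo π M :=
  ⟨fun m _ m' _ hπ => h m m' (Nat.zero_le m) (Nat.zero_le m') hπ,
    fun _ _ => Or.inl fun m m' _ _ hπ => h m m' (Nat.zero_le m) (Nat.zero_le m') hπ⟩

theorem simpleUpTo_of_periodic {π : ℕ → V} {q N M : ℕ} (hqN : q < N) (hMN : M < N)
    (hinj : Set.InjOn π (Set.Iio N)) (hper : ∀ m, q ≤ m → π (m + (N - q)) = π m) :
    SimpleUpTo π M := by
  refine ⟨hinj.mono fun m (hm : m ≤ M) => (show m < N by omega), fun a ha => Or.inr ?_⟩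
  by_cases haq : a ≤ q
  · exact ⟨q - a, N - q, by omega, fun m hm => hper m (by omega),
      fun m m' _ hm _ hm' h => hinj (show m < N by omega) (show m' < N by omega) h⟩
  -- one period from `a` is shifted back into `[q, N)`
  have hback : ∀ m, m < a + (N - q) → π m = π (if m < N then m else m - (N - q)) := by
    intro m _
    split_ifs with h
    · rfl
    · rw [← hper (m - (N - q)) (by omega)]
      congr 1
      omega
  refine ⟨0, N - q, by omega, fun m hm => hper m (by omega), fun m m' _ hm _ hm' h => ?_⟩
  rw [hback m (by omega), hback m' (by omega)] at h
  have := hinj (by simp only [Set.mem_Iio]; split_ifs <;> omega)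
    (by simp only [Set.mem_Iio]; split_ifs <;> omega) h
  split_ifs at this <;> omega

theorem exists_first_repeat {ρ : ℕ → V} (hrep : ¬ SimplePlaySeg ρ 0) :
    ∃ q₁ q₂, q₁ < q₂ ∧ ρ q₁ = ρ q₂ ∧ Set.InjOn ρ (Set.Iio q₂) := by
  have hex : ∃ q₂ q₁, q₁ < q₂ ∧ ρ q₁ = ρ q₂ := by
    obtain ⟨m, m', h, hne⟩ : ∃ m m', ρ m = ρ m' ∧ m ≠ m' := by
      simpa [SimplePlaySeg] using hrep
    rcases hne.lt_or_gt with hlt | hlt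
    · exact ⟨m', m, hlt, h⟩
    · exact ⟨m, m', hlt, h.symm⟩
  obtain ⟨q₁, hq, hρq⟩ := Nat.find_spec hex
  refine ⟨q₁, Nat.find hex, hq, hρq, fun a ha b hb hab => ?_⟩
  by_contra hne
  rcases lt_or_gt_of_ne hne with h | h
  · exact Nat.find_min hex hb ⟨a, h, hab⟩
  · exact Nat.find_min hex ha ⟨b, h, hab.symm⟩

theorem exists_foldsInto_simpleUpTo {ρ : ℕ → V} {q₁ q₂ : ℕ} (hρ : A.IsPlay ρ) (hq : q₁ < q₂)
    (hρq : ρ q₁ = ρ q₂) (hinj : Set.InjOn ρ (Set.Iio q₂)) :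
    ∃ π, A.IsPlay π ∧ FoldsInto π ρ (q₂ - 1) ∧ SimpleUpTo π (q₂ - 1) := by
  -- the lasso `ρ[0, q₁) ρ[q₁, q₂)^ω`
  set π := splice ρ (fun t => ρ (q₁ + t % (q₂ - q₁))) q₁
  have hπ : A.IsPlay π := hρ.splice
    (isPlay_mod (c := fun t => ρ (q₁ + t)) (by omega) (fun j _ => hρ _)
      (by rw [Nat.add_zero, Nat.add_sub_cancel' hq.le, hρq])) (by simp)
  have hform : ∀ m, q₁ ≤ m → π m = ρ (q₁ + (m - q₁) % (q₂ - q₁)) := by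
    intro m hm
    simp only [π, splice]
    split_ifs with h
    · rw [show m = q₁ by omega]
      simp
    · rfl
  have hagree : ∀ m < q₂, π m = ρ m := by
    intro m hm
    by_cases h : m ≤ q₁
    · exact if_pos h
    · rw [hform m (by omega), Nat.mod_eq_of_lt (by omega)]
      congr 1
      omega
  refine ⟨π, hπ, ⟨fun m hm => hagree m (by omega), fun m => ?_⟩,
    simpleUpTo_of_periodic hq (by omega) ?_ ?_⟩
  · by_cases h : m ≤ q₁
    · exact ⟨m, by omega, if_pos h⟩
    · have := Nat.mod_lt (m - q₁) (show 0 < q₂ - q₁ by omega)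
      exact ⟨q₁ + (m - q₁) % (q₂ - q₁), by omega, hform m (by omega)⟩
  · intro a ha b hb hab
    exact hinj ha hb (by rwa [hagree a ha, hagree b hb] at hab)
  · intro m hm
    rw [hform _ (by omega), hform m hm,
      show m + (q₂ - q₁) - q₁ = m - q₁ + (q₂ - q₁) by omega, Nat.add_mod_right]

theorem exists_isNEObj_simpleUpTo {σ : Fin n → A.Strategy} {v0 : V}
    (hNE : A.IsNEObj (fun i => SafeObj (T i)) σ v0)
    (hcyc : NoCycleAvoidAtVisits A T (outcome A σ v0)) :
    ∃ (σ₁ : Fin n → A.Strategy) (M : ℕ), A.IsNEObj (fun i => SafeObj (T i)) σ₁ v0 ∧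
      visitSet T (outcome A σ₁ v0) ⊆ visitSet T (outcome A σ v0) ∧
      satSafe T (outcome A σ v0) ⊆ satSafe T (outcome A σ₁ v0) ∧
      NoCycleAvoidAtVisits A T (outcome A σ₁ v0) ∧
      visitSet T (outcome A σ₁ v0) ⊆ Set.Iic M ∧ SimpleUpTo (outcome A σ₁ v0) M := by
  by_cases hsimple : SimplePlaySeg (outcome A σ v0) 0
  · obtain ⟨M, hM⟩ := (visitSet_finite T (outcome A σ v0)).bddAbove
    exact ⟨σ, M, hNE, subset_rfl, subset_rfl, hcyc, fun f hf => hM hf, hsimple.simpleUpTo M⟩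
  obtain ⟨q₁, q₂, hq, hρq, hinj⟩ := exists_first_repeat hsimple
  obtain ⟨π, hπ, hfold, hsimple⟩ :=
    exists_foldsInto_simpleUpTo (outcome_isPlay σ v0) hq hρq hinj
  obtain ⟨σ₁, hNE₁, rfl⟩ := hfold.exists_isNEObj hNE hπ
  exact ⟨σ₁, q₂ - 1, hNE₁, fun f hf => (hfold.visitSet_subset hf).1, hfold.satSafe_subset,
    hfold.noCycleAvoidAtVisits hcyc, fun f hf => (hfold.visitSet_subset hf).2, hsimple⟩

end Simple

end Arena

open Arena

/-- The decomposition `(sg_1, …, sg_{K+1})` of `π` is encoded by its cut positions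
`e 0 = 0, e 1, …, e K`: `sg_l = π[e (l-1) .. e l]` and `sg_{K+1}` is the suffix of `π`
from `e K`. -/
theorem safety_simple_decomposition
    (V : Type) (n : ℕ) (A : Arena V n) (T : Fin n → Set V) (v0 : V)
    (σ' : Fin n → A.Strategy)
    (hNE : A.IsNEObj (fun i => SafeObj (T i)) σ' v0)
    (π' : ℕ → V) (hπ' : outcome A σ' v0 = π') :
    ∃ (K : ℕ) (σ : Fin n → A.Strategy) (π : ℕ → V) (e : ℕ → ℕ),
      K ≤ (visitSet T π' \ {0}).ncard ∧
      A.IsNEObj (fun i => SafeObj (T i)) σ v0 ∧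
      outcome A σ v0 = π ∧
      -- (i): π is a simple play or a simple lasso
      (SimplePlaySeg π 0 ∨ SimpleLassoSeg π 0) ∧
      -- (ii): the cut positions `e 1 < … < e K` are exactly `Visit(π) ∖ {0}`
      e 0 = 0 ∧ (∀ l, l < K → e l < e (l + 1)) ∧
      visitSet T π \ {0} = {m | ∃ l, 1 ≤ l ∧ l ≤ K ∧ m = e l} ∧
      -- the decomposition is simple
      (∀ l, l < K → SimpleSeg π (e l) (e (l + 1))) ∧
      (SimplePlaySeg π (e K) ∨ SimpleLassoSeg π (e K)) ∧
      -- (iii): no cycle inside the vertices of `sg_1 ⋯ sg_l` avoiding `last(sg_l)`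
      (∀ l, 1 ≤ l → l ≤ K →
        NoCycleAvoid A {x | ∃ m, m ≤ e l ∧ π m = x} (π (e l))) ∧
      -- (iv)
      satSafe T π' ⊆ satSafe T π := by
  subst hπ'
  obtain ⟨σ₁, hNE₁, hvis₁, hsat₁, hcyc₁⟩ := exists_isNEObj_noCycleAvoidAtVisits hNE
  obtain ⟨σ, M, hNE, hvis, hsat, hcyc, hM, hsimple⟩ := exists_isNEObj_simpleUpTo hNE₁ hcyc₁
  set π := outcome A σ v0
  set F := visitSet T π \ {0}
  have hF : F.Finite := (visitSet_finite T π).sdiff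
  obtain ⟨e, he0, hmono, hcuts⟩ := hF.exists_increasing_enum fun h => h.2 rfl
  have hcut : ∀ l, 1 ≤ l → l ≤ F.ncard → e l ∈ F := fun l h1 h2 => hcuts ▸ ⟨l, h1, h2, rfl⟩
  have heM : ∀ l ≤ F.ncard, e l ≤ M := by
    intro l hl
    rcases Nat.eq_zero_or_pos l with rfl | hpos
    · exact he0.trans_le (Nat.zero_le M)
    · exact hM (hcut l hpos hl).1
  refine ⟨F.ncard, σ, π, e,
    Set.ncard_le_ncard (Set.sdiff_subset_sdiff_left (hvis.trans hvis₁)) (visitSet_finite T _).sdiff,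
    hNE, rfl, hsimple.2 0 (Nat.zero_le M), he0, hmono, hcuts,
    fun l hl => hsimple.simpleSeg (heM _ hl), hsimple.2 _ (heM _ le_rfl),
    fun l h1 h2 => hcyc _ (hcut l h1 h2).1, hsat₁.trans hsat⟩
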